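/- Let R be a reduced commutative unital ring and p ∈ R[x] a nonconstant prime polynomial whose leading coefficient is regular. Then the logical powers of p are exactly the positive powers of p. -/

import Mathlib

def IsLogPow {S : Type*} [CommRing S] (p f : S) : Prop :=
  p ∣ f ∧ (p - 1) ∣ (f - 1) ∧ ∀ g : S, g ∣ f → IsUnit g ∨ p ∣ g

/-!
Multiplication by `p` raises the degree by `natDegree p > 0`, so peeling off factors of `p`
from a logical power `f` terminates and writes `f = p ^ n * u` with `u` a unit, i.e. a nonzero
constant `c` since `R` is reduced. From `(p - 1) ∣ (p ^ n * c - 1)` and `(p - 1) ∣ (p ^ n - 1)`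
we get `(p - 1) ∣ (c - 1)`; as `p - 1` has positive degree and the same regular leading
coefficient as `p`, it divides no nonzero constant, so `c = 1`.
-/

open Polynomial
open scoped nonZeroDivisors

theorem Prime.isUnit_or_dvd_of_dvd_pow {M : Type*} [CommMonoidWithZero M] {p : M}
    (hp : Prime p) (hreg : IsLeftRegular p) {g : M} {n : ℕ} (hg : g ∣ p ^ n) :
    IsUnit g ∨ p ∣ g := by
  induction n generalizing g with
  | zero => exact .inl (isUnit_of_dvd_one (by simpa using hg))
  | succ n ih =>
    obtain ⟨h, hgh⟩ := hg
    refine (hp.dvd_or_dvd ⟨p ^ n, by rw [← hgh, pow_succ']⟩).elim .inr fun hph => ?_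
    obtain ⟨h', rfl⟩ := hph
    exact ih ⟨h', hreg (show p * p ^ n = p * (g * h') by rw [← pow_succ', hgh, mul_left_comm])⟩

theorem isLogPow_pow {S : Type*} [CommRing S] {p : S} (hp : Prime p) (hreg : IsLeftRegular p)
    {n : ℕ} (hn : n ≠ 0) : IsLogPow p (p ^ n) :=
  ⟨dvd_pow_self p hn, sub_one_dvd_pow_sub_one p n,
    fun _ hg => hp.isUnit_or_dvd_of_dvd_pow hreg hg⟩

theorem sub_one_dvd_sub_one_of_dvd_pow_mul_sub_one {S : Type*} [CommRing S] {a c : S} (n : ℕ)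
    (h : a - 1 ∣ a ^ n * c - 1) : a - 1 ∣ c - 1 := by
  have key := dvd_sub h ((sub_one_dvd_pow_sub_one a n).mul_right c)
  convert key using 1
  ring

namespace Polynomial

section CommSemiring

variable {R : Type*} [CommSemiring R] {p q f : R[X]}

theorem natDegree_mul_of_leadingCoeff_mem_nonZeroDivisors (hp : p.leadingCoeff ∈ R⁰)
    (hq : q ≠ 0) : (p * q).natDegree = p.natDegree + q.natDegree :=
  natDegree_mul' ((mul_left_mem_nonZeroDivisors_eq_zero_iff hp).not.mpr
    (leadingCoeff_ne_zero.mpr hq))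

theorem natDegree_le_of_dvd_of_leadingCoeff_mem_nonZeroDivisors (hp : p.leadingCoeff ∈ R⁰)
    (hpf : p ∣ f) (hf : f ≠ 0) : p.natDegree ≤ f.natDegree := by
  obtain ⟨q, rfl⟩ := hpf
  rw [natDegree_mul_of_leadingCoeff_mem_nonZeroDivisors hp (right_ne_zero_of_mul hf)]
  exact Nat.le_add_right _ _

theorem eq_zero_of_dvd_C_of_leadingCoeff_mem_nonZeroDivisors (hdeg : 0 < p.natDegree)
    (hp : p.leadingCoeff ∈ R⁰) {a : R} (h : p ∣ C a) : a = 0 := by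
  by_contra ha
  have := natDegree_le_of_dvd_of_leadingCoeff_mem_nonZeroDivisors hp h (C_ne_zero.mpr ha)
  rw [natDegree_C] at this
  omega

theorem exists_eq_pow_mul_of_forall_dvd_isUnit_or_dvd (hdeg : 0 < p.natDegree)
    (hp : p.leadingCoeff ∈ R⁰) (hf : f ≠ 0) (hdvd : ∀ g, g ∣ f → IsUnit g ∨ p ∣ g) :
    ∃ n u, IsUnit u ∧ f = p ^ n * u := by
  induction hN : f.natDegree using Nat.strong_induction_on generalizing f with
  | _ N ih =>
  rcases hdvd f dvd_rfl with hu | ⟨g, rfl⟩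
  · exact ⟨0, f, hu, by simp⟩
  have hg : g ≠ 0 := right_ne_zero_of_mul hf
  have hlt : g.natDegree < N := by
    rw [← hN, natDegree_mul_of_leadingCoeff_mem_nonZeroDivisors hp hg]
    omega
  obtain ⟨n, u, hu, rfl⟩ := ih _ hlt hg (fun h hh => hdvd h (hh.mul_left p)) rfl
  exact ⟨n + 1, u, hu, by ring⟩

end CommSemiring

section CommRing

variable {R : Type*} [CommRing R]

theorem natDegree_sub_one (p : R[X]) : (p - 1).natDegree = p.natDegree := by
  rw [← C_1, natDegree_sub_C]

theorem leadingCoeff_sub_one {p : R[X]} (hdeg : 0 < p.natDegree) :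
    (p - 1).leadingCoeff = p.leadingCoeff :=
  leadingCoeff_sub_of_degree_lt (degree_one_le.trans_lt (natDegree_pos_iff_degree_pos.mp hdeg))

end CommRing

end Polynomial

open Polynomial in
theorem stmt_19 {R : Type*} [CommRing R] [IsReduced R]
    (p : R[X]) (hdeg : 0 < p.natDegree) (hp : Prime p)
    (hlc : p.leadingCoeff ∈ nonZeroDivisors R) :
    ∀ f : R[X], IsLogPow p f ↔ ∃ n : ℕ, 1 ≤ n ∧ f = p ^ n := by
  have hreg : IsLeftRegular p :=
    (isRegular_iff_mem_nonZeroDivisors.mpr (mem_nonZeroDivisors_of_leadingCoeff hlc)).left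
  have hdeg' : 0 < (p - 1).natDegree := by rwa [natDegree_sub_one]
  have hlc' : (p - 1).leadingCoeff ∈ R⁰ := by rwa [leadingCoeff_sub_one hdeg]
  intro f
  refine ⟨fun ⟨hpf, hsub, hdvd⟩ => ?_, fun ⟨n, hn, hf⟩ => hf ▸ isLogPow_pow hp hreg (by omega)⟩
  have hf : f ≠ 0 := by
    rintro rfl
    exact not_isUnit_of_natDegree_pos_of_isReduced _ hdeg'
      (isUnit_of_dvd_one (by simpa using hsub.neg_right))
  obtain ⟨n, u, hu, rfl⟩ := exists_eq_pow_mul_of_forall_dvd_isUnit_or_dvd hdeg hlc hf hdvd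
  obtain ⟨c, rfl⟩ : ∃ c, u = C c := ⟨_, eq_C_of_natDegree_eq_zero
    (Nat.eq_zero_of_not_pos fun h => not_isUnit_of_natDegree_pos_of_isReduced u h hu)⟩
  have hn : n ≠ 0 := by
    rintro rfl
    exact hp.not_isUnit (isUnit_of_dvd_unit (by simpa using hpf) hu)
  have hc : c - 1 = 0 := eq_zero_of_dvd_C_of_leadingCoeff_mem_nonZeroDivisors hdeg' hlc'
    (by simpa using sub_one_dvd_sub_one_of_dvd_pow_mul_sub_one n hsub)
  exact ⟨n, by omega, by simp [sub_eq_zero.mp hc]⟩
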